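/- arXiv:0909.1742 — 3 statements merged into one kernel-verified Lean document; each statement's English description precedes it below -/
import Mathlib

section
/- Let M be a symmetric monoidal category which is a groupoid and in which every translation functor X ⊗ − is faithful. Then for any pairs A = (A⁺, A⁻) and B = (B⁺, B⁻) of objects of M, every morphism in T(A,B) is an isomorphism, and T(A,B) is equivalent to the discrete category on its set of connected components (the quotient of its objects by the equivalence relation generated by the existence of a morphism). In particular the projection from T(A,B) to this discrete category is an equivalence of categories. -/
/-!
STATEMENT 3: Let M be a symmetric monoidal category which is a groupoid and in which every
translation functor X ⊗ − is faithful. Then for any pairs A, B of objects of M, every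
morphism in T(A,B) is an isomorphism, and the projection from T(A,B) to the discrete
category on its set of connected components is an equivalence of categories.
-/

open CategoryTheory MonoidalCategory

universe v u

variable (M : Type u) [Category.{v} M] [MonoidalCategory M] [SymmetricCategory M]

/-- Objects of the category `T(A,B)`: triples `(X, α⁺, α⁻)` with `α^± : A^± ⊗ X ⟶ B^±`. -/
structure TObj (Ap Am Bp Bm : M) : Type (max u v) where
  X : M
  plus : Ap ⊗ X ⟶ Bp
  minus : Am ⊗ X ⟶ Bm

variable {M}

/-- Morphisms of `T(A,B)`: maps `φ : X ⟶ Y` with `β^± ∘ (id ⊗ φ) = α^±`. -/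
@[ext]
structure THom {Ap Am Bp Bm : M} (x y : TObj M Ap Am Bp Bm) : Type v where
  φ : x.X ⟶ y.X
  wp : (𝟙 Ap ⊗ₘ φ) ≫ y.plus = x.plus
  wm : (𝟙 Am ⊗ₘ φ) ≫ y.minus = x.minus

instance {Ap Am Bp Bm : M} : Category (TObj M Ap Am Bp Bm) where
  Hom := THom
  id x := { φ := 𝟙 x.X, wp := by simp, wm := by simp }
  comp {x y z} f g :=
    { φ := f.φ ≫ g.φ
      wp := by rw [← f.wp, ← g.wp]; simp [MonoidalCategory.id_tensorHom]
      wm := by rw [← f.wm, ← g.wm]; simp [MonoidalCategory.id_tensorHom] }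
  id_comp f := THom.ext (by simp)
  comp_id f := THom.ext (by simp)
  assoc f g h := THom.ext (by simp)

/-- The setoid of connected components of `T(A,B)`: the equivalence relation on objects
generated by the existence of a morphism. -/
def componentSetoid (Ap Am Bp Bm : M) : Setoid (TObj M Ap Am Bp Bm) :=
  Relation.EqvGen.setoid (fun x y => Nonempty (x ⟶ y))

/-- The projection from `T(A,B)` to the discrete category on its set of connected
components. -/
def projToComponents (Ap Am Bp Bm : M) :
    TObj M Ap Am Bp Bm ⥤ Discrete (Quotient (componentSetoid Ap Am Bp Bm)) where
  obj x := ⟨Quotient.mk (componentSetoid Ap Am Bp Bm) x⟩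
  map {x y} f := eqToHom (congrArg Discrete.mk
    (Quot.sound (Relation.EqvGen.rel x y ⟨f⟩)))
  map_id := by intros; simp
  map_comp := by intros; simp

/-!
If `φ : X ⟶ Y` underlies a morphism of `T(A,B)`, so does `φ⁻¹`; hence `T(A,B)` is a groupoid and
"there is a morphism `x ⟶ y`" is already an equivalence relation, whose classes are the connected
components. Two morphisms `φ, ψ : x ⟶ y` satisfy `(𝟙 ⊗ φ) ≫ β⁺ = (𝟙 ⊗ ψ) ≫ β⁺`; cancelling the
isomorphism `β⁺` and using faithfulness of `A⁺ ⊗ −` gives `φ = ψ`. A groupoid with at most one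
morphism between any two objects is equivalent to the discrete category on its components.
-/

theorem CategoryTheory.IsGroupoid.equivalence_nonempty_hom (C : Type*) [Category C]
    [IsGroupoid C] : _root_.Equivalence fun x y : C => Nonempty (x ⟶ y) where
  refl x := ⟨𝟙 x⟩
  symm := fun ⟨f⟩ => ⟨inv f⟩
  trans := fun ⟨f⟩ ⟨g⟩ => ⟨f ≫ g⟩

section

variable {C : Type*} [Category C] [MonoidalCategory C] {Ap Am Bp Bm : C}

theorem THom.isIso_of_isIso_φ {x y : TObj C Ap Am Bp Bm} (f : x ⟶ y) [IsIso f.φ] : IsIso f := by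
  let g : y ⟶ x :=
    { φ := inv f.φ
      wp := by rw [← f.wp, id_tensorHom, id_tensorHom, whiskerLeft_inv_hom'_assoc]
      wm := by rw [← f.wm, id_tensorHom, id_tensorHom, whiskerLeft_inv_hom'_assoc] }
  exact ⟨g, THom.ext (IsIso.hom_inv_id f.φ), THom.ext (IsIso.inv_hom_id f.φ)⟩

instance [IsGroupoid C] : IsGroupoid (TObj C Ap Am Bp Bm) where
  all_isIso f := THom.isIso_of_isIso_φ f

theorem TObj.subsingleton_hom [(tensorLeft Ap).Faithful] (x y : TObj C Ap Am Bp Bm)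
    [Mono y.plus] : Subsingleton (x ⟶ y) := by
  refine ⟨fun f g => THom.ext ((tensorLeft Ap).map_injective ?_)⟩
  change Ap ◁ f.φ = Ap ◁ g.φ
  rw [← id_tensorHom, ← id_tensorHom, ← cancel_mono y.plus, f.wp, g.wp]

theorem TObj.nonempty_hom_of_componentSetoid [IsGroupoid C] {x y : TObj C Ap Am Bp Bm}
    (h : componentSetoid Ap Am Bp Bm x y) : Nonempty (x ⟶ y) :=
  (IsGroupoid.equivalence_nonempty_hom _).eqvGen_iff.mp h

instance [IsGroupoid C] [(tensorLeft Ap).Faithful] :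
    (projToComponents Ap Am Bp Bm).Faithful where
  map_injective {_ y} _ _ _ := (TObj.subsingleton_hom _ y).elim _ _

instance [IsGroupoid C] : (projToComponents Ap Am Bp Bm).Full where
  map_surjective f :=
    ⟨(TObj.nonempty_hom_of_componentSetoid (Quotient.exact (Discrete.eq_of_hom f))).some,
      Subsingleton.elim _ _⟩

instance : (projToComponents Ap Am Bp Bm).EssSurj where
  mem_essImage := fun ⟨q⟩ => Quotient.inductionOn q fun x => ⟨x, ⟨Iso.refl _⟩⟩

end

theorem T_discrete_on_components
    (hgrp : ∀ {x y : M} (f : x ⟶ y), IsIso f)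
    (hfaith : ∀ X : M, (tensorLeft X).Faithful)
    (Ap Am Bp Bm : M) :
    (∀ (x y : TObj M Ap Am Bp Bm) (f : x ⟶ y), IsIso f) ∧
      (projToComponents Ap Am Bp Bm).IsEquivalence := by
  have : IsGroupoid M := ⟨hgrp⟩
  have := hfaith Ap
  exact ⟨fun _ _ f => IsGroupoid.all_isIso f, { }⟩
end

section
/- Let M be a symmetric monoidal category which is a groupoid and in which every translation functor X ⊗ − is faithful. Let π₀M be the commutative monoid of isomorphism classes of objects of M under ⊗, and Gr(π₀M) its group completion (Grothendieck group). On pairs A = (A⁺, A⁻) of objects of M, let ≈ be the equivalence relation generated by declaring A ≈ B whenever T(A,B) is nonempty. Then the assignment (A⁺, A⁻) ↦ [A⁺] − [A⁻] induces a well-defined bijection from the set of ≈-equivalence classes of pairs onto Gr(π₀M). -/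
/-!
STATEMENT 5: Let M be a symmetric monoidal category which is a groupoid with faithful
translation functors.  Let π₀M be the commutative monoid of isomorphism classes of objects
under ⊗ (here realized as `CategoryTheory.Skeleton M` with its `CommMonoid` structure) and
`Gr(π₀M)` its group completion (here realized as the localization of the commutative monoid
at the top submonoid).  Let ≈ be the equivalence relation on pairs of objects generated by
A ≈ B whenever T(A,B) is nonempty.  Then (A⁺, A⁻) ↦ [A⁺] − [A⁻] induces a well-defined
bijection from the set of ≈-classes onto Gr(π₀M).
-/

open CategoryTheory MonoidalCategory

universe v u

variable (M : Type u) [Category.{v} M] [MonoidalCategory M] [SymmetricCategory M]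

/-- The equivalence relation `≈` on pairs of objects of `M`, generated by declaring
`A ≈ B` whenever `T(A,B)` is nonempty. -/
def pairSetoid : Setoid (M × M) :=
  Relation.EqvGen.setoid (fun A B => Nonempty (TObj M A.1 A.2 B.1 B.2))

/-!
Since `M` is a groupoid, an object of `T(A,B)` consists of isomorphisms `A^± ⊗ X ≅ B^±`, so
`[B^±] = [A^±] + [X]` and the difference `[A⁺] - [A⁻]` is unchanged: the map is well defined.
It is surjective since every class is the class of an object. For injectivity,
`[A⁺] + [B⁻] + [C] = [B⁺] + [A⁻] + [C]` gives an isomorphism `A⁺ ⊗ (C ⊗ B⁻) ≅ B⁺ ⊗ (C ⊗ A⁻)`, and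
together with the symmetry `A⁻ ⊗ (C ⊗ B⁻) ≅ B⁻ ⊗ (C ⊗ A⁻)` this links `A` and `B` through
`A ≈ (A⁺ ⊗ (C ⊗ B⁻), A⁻ ⊗ (C ⊗ B⁻)) ≈ (B⁺ ⊗ (C ⊗ A⁻), B⁻ ⊗ (C ⊗ A⁻)) ≈ B`.
-/

section

variable {M}

noncomputable def pairClass (A : M × M) : Localization (⊤ : Submonoid (Skeleton M)) :=
  Localization.mk (toSkeleton A.1) ⟨toSkeleton A.2, Submonoid.mem_top _⟩

lemma pairClass_eq_iff {A B : M × M} :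
    pairClass A = pairClass B ↔
      ∃ c : Skeleton M, c * (toSkeleton B.2 * toSkeleton A.1) =
        c * (toSkeleton A.2 * toSkeleton B.1) := by
  simp only [pairClass, Localization.mk_eq_mk_iff, Localization.r_iff_exists, Subtype.exists,
    Submonoid.mem_top, exists_const]

lemma pairClass_eq_of_tObj {A B : M × M} (t : TObj M A.1 A.2 B.1 B.2) [IsIso t.plus]
    [IsIso t.minus] : pairClass A = pairClass B := by
  have hplus : toSkeleton B.1 = toSkeleton A.1 * toSkeleton t.X := by
    rw [← Skeleton.toSkeleton_tensorObj]
    exact congr_toSkeleton_of_iso (asIso t.plus).symm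
  have hminus : toSkeleton B.2 = toSkeleton A.2 * toSkeleton t.X := by
    rw [← Skeleton.toSkeleton_tensorObj]
    exact congr_toSkeleton_of_iso (asIso t.minus).symm
  exact pairClass_eq_iff.mpr ⟨1, by rw [hplus, hminus]; ac_rfl⟩

lemma pairClass_eq_of_rel (hgrp : ∀ {x y : M} (f : x ⟶ y), IsIso f) {A B : M × M}
    (h : pairSetoid M A B) : pairClass A = pairClass B := by
  induction h with
  | rel A B h =>
    obtain ⟨t⟩ := h
    have := hgrp t.plus
    have := hgrp t.minus
    exact pairClass_eq_of_tObj t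
  | refl => rfl
  | symm _ _ _ ih => exact ih.symm
  | trans _ _ _ _ _ ih₁ ih₂ => exact ih₁.trans ih₂

lemma pairSetoid_rel_of_pairClass_eq {A B : M × M} (h : pairClass A = pairClass B) :
    pairSetoid M A B := by
  obtain ⟨c, hc⟩ := pairClass_eq_iff.mp h
  obtain ⟨C, rfl⟩ : ∃ C : M, toSkeleton C = c := ⟨_, toSkeleton_fromSkeleton_obj c⟩
  have rel_tensor (P : M × M) (Z : M) : pairSetoid M P (P.1 ⊗ Z, P.2 ⊗ Z) :=
    Relation.EqvGen.rel _ _ ⟨⟨Z, 𝟙 _, 𝟙 _⟩⟩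
  have rel_of_toSkeleton_eq {P Q : M × M} (h₁ : toSkeleton P.1 = toSkeleton Q.1)
      (h₂ : toSkeleton P.2 = toSkeleton Q.2) : pairSetoid M P Q :=
    Relation.EqvGen.rel _ _
      ⟨⟨𝟙_ M, (ρ_ _).hom ≫ (Skeleton.isoOfEq h₁).hom, (ρ_ _).hom ≫ (Skeleton.isoOfEq h₂).hom⟩⟩
  have hmid : pairSetoid M (A.1 ⊗ (C ⊗ B.2), A.2 ⊗ (C ⊗ B.2))
      (B.1 ⊗ (C ⊗ A.2), B.2 ⊗ (C ⊗ A.2)) := by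
    apply rel_of_toSkeleton_eq <;> simp only [Skeleton.toSkeleton_tensorObj]
    · calc toSkeleton A.1 * (toSkeleton C * toSkeleton B.2)
          = toSkeleton C * (toSkeleton B.2 * toSkeleton A.1) := by ac_rfl
        _ = toSkeleton C * (toSkeleton A.2 * toSkeleton B.1) := hc
        _ = toSkeleton B.1 * (toSkeleton C * toSkeleton A.2) := by ac_rfl
    · ac_rfl
  exact ((rel_tensor A _).trans _ _ _ hmid).trans _ _ _ ((rel_tensor B _).symm _ _)

lemma pairClass_surjective : Function.Surjective (pairClass (M := M)) := by
  intro x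
  induction x using Localization.induction_on with | H p =>
  obtain ⟨a, b, -⟩ := p
  exact ⟨((fromSkeleton M).obj a, (fromSkeleton M).obj b), by
    simp only [pairClass, toSkeleton_fromSkeleton_obj]⟩

end

theorem pairs_biject_with_group_completion
    (hgrp : ∀ {x y : M} (f : x ⟶ y), IsIso f) :
    ∃ f : Quotient (pairSetoid M) →
        Localization (⊤ : Submonoid (Skeleton M)),
      (∀ A : M × M,
        f (Quotient.mk (pairSetoid M) A) =
          Localization.mk (toSkeleton A.1) ⟨toSkeleton A.2, Submonoid.mem_top _⟩) ∧
      Function.Bijective f := by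
  refine ⟨Quotient.lift pairClass fun _ _ => pairClass_eq_of_rel hgrp, fun _ => rfl, ?_, ?_⟩
  · rintro ⟨A⟩ ⟨B⟩ h
    exact Quotient.sound (pairSetoid_rel_of_pairClass_eq h)
  · intro x
    obtain ⟨A, rfl⟩ := pairClass_surjective x
    exact ⟨Quotient.mk _ A, rfl⟩
end

section
/- For every n ≥ 1 and every m ∈ GL_n(ℤ), the vertices diag(m, I_n) and I_{2n} of the simplicial set B(*, GL_{2n}(ℕ), GL_{2n}(ℤ)) lie in the same path component; that is, they are connected by a finite chain of 1-simplices. -/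
/-!
Vertices joined to `1` form a subgroup of `GL_{2n}(ℤ)`, since left translation commutes with
right multiplication; it contains the natural matrices, hence every `[[1, X], [0, 1]]` with
`X = X⁺ - X⁻` integral. Writing `m = P - Q` with `P`, `Q` natural,
`diag(m, 1) · [[1, m⁻¹Q], [0, 1]] · [[1, 0], [1, 1]] = [[P, Q], [1, 1]]`
is natural, so `diag(m, 1)` lies in that subgroup.
-/

/-- The "faces of a common 1-simplex" relation on the vertices `GL_{2n}(ℤ)` of
`B(*, GL_{2n}(ℕ), GL_{2n}(ℤ))`: `t₁` and `t₂` bound a 1-simplex `(a, t₁)` with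
`a ∈ GL_{2n}(ℕ)` acting by left matrix multiplication via `ℕ ⊂ ℤ`. -/
def oneSimplexRel (N : ℕ) (t₁ t₂ : (Matrix (Fin N) (Fin N) ℤ)ˣ) : Prop :=
  ∃ a : Matrix (Fin N) (Fin N) ℕ,
    IsUnit (a.map (Nat.cast : ℕ → ℤ)) ∧
    (a.map (Nat.cast : ℕ → ℤ)) * (t₁ : Matrix (Fin N) (Fin N) ℤ) =
      (t₂ : Matrix (Fin N) (Fin N) ℤ)

open Matrix Relation

section LeftTranslation

variable {G : Type*} [Group G]

theorem Relation.EqvGen.mul_right {S : Set G} {x y : G}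
    (h : EqvGen (fun a b => ∃ s ∈ S, s * a = b) x y) (g : G) :
    EqvGen (fun a b => ∃ s ∈ S, s * a = b) (x * g) (y * g) := by
  induction h with
  | rel a b hab =>
    obtain ⟨s, hs, rfl⟩ := hab
    exact .rel _ _ ⟨s, hs, (mul_assoc s a g).symm⟩
  | refl => exact .refl _
  | symm _ _ _ ih => exact .symm _ _ ih
  | trans _ _ _ _ _ ihab ihbc => exact .trans _ _ _ ihab ihbc

theorem Relation.eqvGen_one_of_mem_closure {S : Set G} {g : G} (hg : g ∈ Subgroup.closure S) :
    EqvGen (fun a b => ∃ s ∈ S, s * a = b) g 1 := by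
  induction hg using Subgroup.closure_induction with
  | mem s hs => exact .symm _ _ (.rel _ _ ⟨s, hs, mul_one s⟩)
  | one => exact .refl _
  | mul x y _ _ hx hy => exact .trans _ _ _ (by simpa using hx.mul_right y) hy
  | inv x _ hx => exact .symm _ _ (by simpa using hx.mul_right x⁻¹)

end LeftTranslation

def natUnits (ι : Type*) [Fintype ι] [DecidableEq ι] : Set (GL ι ℤ) :=
  {u | ∃ a : Matrix ι ι ℕ, a.map (Nat.cast : ℕ → ℤ) = u}

section NatUnits

variable {ι κ : Type*} [Fintype ι] [DecidableEq ι] [Fintype κ] [DecidableEq κ]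

theorem oneSimplexRel_of_mul_eq {N : ℕ} {t₁ t₂ : GL (Fin N) ℤ}
    (h : ∃ s ∈ natUnits (Fin N), s * t₁ = t₂) : oneSimplexRel N t₁ t₂ := by
  obtain ⟨s, ⟨a, ha⟩, rfl⟩ := h
  exact ⟨a, ha ▸ s.isUnit, by rw [ha, Units.val_mul]⟩

theorem mem_closure_natUnits_of_reindex (e : ι ≃ κ) {u : GL ι ℤ}
    (hu : u ∈ Subgroup.closure (natUnits ι)) {t : GL κ ℤ} (ht : (t : Matrix κ κ ℤ) = reindex e e u) :
    t ∈ Subgroup.closure (natUnits κ) := by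
  let φ : GL ι ℤ →* GL κ ℤ := Units.map (reindexAlgEquiv ℤ ℤ e).toMonoidHom
  have htu : t = φ u := Units.ext ht
  have hmap := Subgroup.mem_map_of_mem φ hu
  rw [MonoidHom.map_closure, ← htu] at hmap
  refine Subgroup.closure_mono ?_ hmap
  rintro _ ⟨v, ⟨a, ha⟩, rfl⟩
  exact ⟨reindex e e a, by ext i j; simp [φ, ← ha]⟩

end NatUnits

section BlockUnits

variable {ι R : Type*} [Fintype ι] [DecidableEq ι] [Ring R]

def upperUnitriangular (X : Matrix ι ι R) : GL (ι ⊕ ι) R where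
  val := fromBlocks 1 X 0 1
  inv := fromBlocks 1 (-X) 0 1
  val_inv := by simp [fromBlocks_multiply, ← fromBlocks_one]
  inv_val := by simp [fromBlocks_multiply, ← fromBlocks_one]

def lowerUnitriangular (Y : Matrix ι ι R) : GL (ι ⊕ ι) R where
  val := fromBlocks 1 0 Y 1
  inv := fromBlocks 1 0 (-Y) 1
  val_inv := by simp [fromBlocks_multiply, ← fromBlocks_one]
  inv_val := by simp [fromBlocks_multiply, ← fromBlocks_one]

theorem upperUnitriangular_add (X Y : Matrix ι ι R) :
    upperUnitriangular (X + Y) = upperUnitriangular X * upperUnitriangular Y :=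
  Units.ext <| by simp [upperUnitriangular, fromBlocks_multiply, add_comm]

def blockDiagOne (m : GL ι R) : GL (ι ⊕ ι) R where
  val := fromBlocks m 0 0 1
  inv := fromBlocks ↑m⁻¹ 0 0 1
  val_inv := by simp [fromBlocks_multiply, ← fromBlocks_one]
  inv_val := by simp [fromBlocks_multiply, ← fromBlocks_one]

end BlockUnits

theorem Matrix.exists_nat_sub_nat {m n : Type*} (X : Matrix m n ℤ) :
    ∃ P Q : Matrix m n ℕ, P.map (Nat.cast : ℕ → ℤ) = X + Q.map Nat.cast :=
  ⟨X.map Int.toNat, (-X).map Int.toNat, by ext i j; simp; omega⟩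

section Closure

variable {ι : Type*} [Fintype ι] [DecidableEq ι]

theorem upperUnitriangular_natCast_mem_natUnits (X : Matrix ι ι ℕ) :
    upperUnitriangular (X.map Nat.cast : Matrix ι ι ℤ) ∈ natUnits (ι ⊕ ι) :=
  ⟨fromBlocks 1 X 0 1, by simp [upperUnitriangular, fromBlocks_map]⟩

theorem lowerUnitriangular_one_mem_natUnits :
    lowerUnitriangular (1 : Matrix ι ι ℤ) ∈ natUnits (ι ⊕ ι) :=
  ⟨fromBlocks 1 0 1 1, by simp [lowerUnitriangular, fromBlocks_map]⟩

theorem upperUnitriangular_mem_closure_natUnits (X : Matrix ι ι ℤ) :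
    upperUnitriangular X ∈ Subgroup.closure (natUnits (ι ⊕ ι)) := by
  obtain ⟨P, Q, hPQ⟩ := X.exists_nat_sub_nat
  have h : upperUnitriangular X =
      upperUnitriangular (P.map Nat.cast) * (upperUnitriangular (Q.map Nat.cast))⁻¹ := by
    rw [hPQ, upperUnitriangular_add, mul_inv_cancel_right]
  rw [h]
  exact mul_mem (Subgroup.subset_closure (upperUnitriangular_natCast_mem_natUnits P))
    (inv_mem (Subgroup.subset_closure (upperUnitriangular_natCast_mem_natUnits Q)))

theorem blockDiagOne_mem_closure_natUnits (m : GL ι ℤ) :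
    blockDiagOne m ∈ Subgroup.closure (natUnits (ι ⊕ ι)) := by
  obtain ⟨P, Q, hPQ⟩ := (m : Matrix ι ι ℤ).exists_nat_sub_nat
  set U := upperUnitriangular (((m⁻¹ : GL ι ℤ) : Matrix ι ι ℤ) * Q.map Nat.cast)
  set L : GL (ι ⊕ ι) ℤ := lowerUnitriangular 1
  have hnat : blockDiagOne m * U * L ∈ natUnits (ι ⊕ ι) :=
    ⟨fromBlocks P Q 1 1, by
      simp [U, L, blockDiagOne, upperUnitriangular, lowerUnitriangular, fromBlocks_map,
        fromBlocks_multiply, hPQ]⟩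
  have h : blockDiagOne m = blockDiagOne m * U * L * L⁻¹ * U⁻¹ := by group
  rw [h]
  exact mul_mem (mul_mem (Subgroup.subset_closure hnat)
    (inv_mem (Subgroup.subset_closure lowerUnitriangular_one_mem_natUnits)))
    (inv_mem (upperUnitriangular_mem_closure_natUnits _))

end Closure

theorem block_diag_connected_to_identity_general (n : ℕ)
    (m : (Matrix (Fin n) (Fin n) ℤ)ˣ)
    (t : (Matrix (Fin (n + n)) (Fin (n + n)) ℤ)ˣ)
    (ht : (t : Matrix (Fin (n + n)) (Fin (n + n)) ℤ) =
      Matrix.reindex finSumFinEquiv finSumFinEquiv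
        (Matrix.fromBlocks (m : Matrix (Fin n) (Fin n) ℤ) 0 0 (1 : Matrix (Fin n) (Fin n) ℤ))) :
    Relation.EqvGen (oneSimplexRel (n + n)) t 1 := by
  refine EqvGen.mono (fun _ _ => oneSimplexRel_of_mul_eq) _ _ (eqvGen_one_of_mem_closure ?_)
  exact mem_closure_natUnits_of_reindex finSumFinEquiv (blockDiagOne_mem_closure_natUnits m) ht

theorem block_diag_connected_to_identity (n : ℕ) (hn : 1 ≤ n)
    (m : (Matrix (Fin n) (Fin n) ℤ)ˣ)
    (t : (Matrix (Fin (n + n)) (Fin (n + n)) ℤ)ˣ)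
    (ht : (t : Matrix (Fin (n + n)) (Fin (n + n)) ℤ) =
      Matrix.reindex finSumFinEquiv finSumFinEquiv
        (Matrix.fromBlocks (m : Matrix (Fin n) (Fin n) ℤ) 0 0 (1 : Matrix (Fin n) (Fin n) ℤ))) :
    Relation.EqvGen (oneSimplexRel (n + n)) t 1 :=
  block_diag_connected_to_identity_general n m t ht
end
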